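/- arXiv:2203.14120 — 2 statements merged into one kernel-verified Lean document; each statement's English description precedes it below -/
import Mathlib

section
/- Let F : ℝ × ℝ^d → ℝ^d be bounded and continuous, and let x : [a,s] → ℝ^d be a solution of ẋ(t) = F(t, x(t)). Then for every ε > 0 there exist τ ∈ (0, s−a) and ρ > 0 such that for every y with |x(s) − y| < ρ there exists a piecewise continuous control u : [a,s] → ℝ^d with |u(t)| < ε for all t, u ≡ 0 on [a, s−τ], and a solution x_ε : [a,s] → ℝ^d of ẋ_ε(t) = F(t, x_ε(t)) + u(t) satisfying x_ε = x on [a, s−τ] and x_ε(s) = y. -/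
open Metric Set
noncomputable section

/-- A function is piecewise continuous on a set if it is continuous there
except possibly at finitely many points. -/
def PiecewiseContinuousOn {d : ℕ} (u : ℝ → EuclideanSpace ℝ (Fin d)) (s : Set ℝ) : Prop :=
  ∃ S : Finset ℝ, ContinuousOn u (s \ (S : Set ℝ))

/-!
Push the endpoint by the ramp `x + φ • v`, where `v = y - x(s)` and `φ` rises linearly from `0`
at `m = s - τ` to `1` at `s`. This is a solution of `ẋ = F(t, x) + u` for the control
`u = F(t, x) - F(t, x + φ • v) + v / τ` on `(m, s)` and `u = 0` elsewhere. The term `v / τ` is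
small once `‖v‖` is small compared to `ε τ`, and the difference of the values of `F` is small
because `F` is uniformly continuous near the compact graph of `x`.
-/

theorem ContinuousOn.indicator_compl_frontier {α β : Type*} [TopologicalSpace α]
    [TopologicalSpace β] [Zero β] {t : Set α} (ht : IsOpen t) {f : α → β}
    (hf : ContinuousOn f t) : ContinuousOn (t.indicator f) (frontier t)ᶜ := by
  classical
  refine ContinuousOn.piecewise (fun p hp => absurd hp.2 hp.1) ?_ continuousOn_const
  rw [inter_comm, ← sdiff_eq, closure_sdiff_frontier, ht.interior_eq]
  exact hf

theorem IsCompact.exists_pos_forall_dist_lt {α β : Type*} [PseudoMetricSpace α]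
    [PseudoMetricSpace β] {K : Set α} (hK : IsCompact K) {f : α → β}
    (hf : ∀ p ∈ K, ContinuousAt f p) {ε : ℝ} (hε : 0 < ε) :
    ∃ δ > 0, ∀ p ∈ K, ∀ q, dist p q < δ → dist (f p) (f q) < ε := by
  obtain ⟨δ, hδ, hsub⟩ := Metric.mem_uniformity_dist.mp
    (hK.uniformContinuousAt_of_continuousAt f hf (Metric.dist_mem_uniformity hε))
  exact ⟨δ, hδ, fun p hp q hpq => hsub hpq hp⟩

theorem IsCompact.exists_pos_forall_dist_lt_near_graph {E : Type*} [SeminormedAddCommGroup E]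
    {K : Set ℝ} (hK : IsCompact K) {F : ℝ × E → E} (hF : Continuous F) {x : ℝ → E}
    (hx : ContinuousOn x K) {ε : ℝ} (hε : 0 < ε) :
    ∃ δ > 0, ∀ t ∈ K, ∀ w : E, ‖w‖ < δ →
      dist (F (t, x t)) (F (t, x t + w)) < ε := by
  have hgraph := hK.image_of_continuousOn (continuousOn_id.prodMk hx)
  obtain ⟨δ, hδ, hFδ⟩ := hgraph.exists_pos_forall_dist_lt (fun p _ => hF.continuousAt) hε
  refine ⟨δ, hδ, fun t ht w hw => hFδ _ (mem_image_of_mem _ ht) _ ?_⟩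
  simpa [Prod.dist_eq] using hw

def ramp (m s t : ℝ) : ℝ := min 1 (max 0 ((t - m) / (s - m)))

section Ramp

variable {m s t : ℝ}

theorem ramp_mem_Icc : ramp m s t ∈ Icc 0 1 :=
  ⟨le_min zero_le_one (le_max_left _ _), min_le_left _ _⟩

theorem ramp_of_le (hms : m ≤ s) (ht : t ≤ m) : ramp m s t = 0 := by
  have hneg : (t - m) / (s - m) ≤ 0 := div_nonpos_of_nonpos_of_nonneg (by linarith) (by linarith)
  rw [ramp, max_eq_left hneg, min_eq_right zero_le_one]

theorem ramp_of_mem_Icc (ht : t ∈ Icc m s) : ramp m s t = (t - m) / (s - m) := by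
  obtain ⟨hmt, hts⟩ := ht
  have hpos : 0 ≤ (t - m) / (s - m) := div_nonneg (by linarith) (by linarith)
  have hle : (t - m) / (s - m) ≤ 1 := div_le_one_of_le₀ (by linarith) (by linarith)
  rw [ramp, max_eq_right hpos, min_eq_right hle]

theorem ramp_right (hms : m ≠ s) : ramp m s s = 1 := by
  simp [ramp, div_self (sub_ne_zero.2 hms.symm)]

theorem continuous_ramp : Continuous (ramp m s) := by
  unfold ramp
  fun_prop

theorem hasDerivAt_ramp_of_lt (hms : m ≤ s) (ht : t < m) : HasDerivAt (ramp m s) 0 t := by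
  refine (hasDerivAt_const t 0).congr_of_eventuallyEq ?_
  filter_upwards [Iio_mem_nhds ht] with r hr using ramp_of_le hms hr.le

theorem hasDerivAt_ramp_of_mem_Ioo (ht : t ∈ Ioo m s) : HasDerivAt (ramp m s) (s - m)⁻¹ t := by
  have hlin : HasDerivAt (fun r => (r - m) / (s - m)) (s - m)⁻¹ t := by
    simpa using ((hasDerivAt_id t).sub_const m).div_const (s - m)
  refine hlin.congr_of_eventuallyEq ?_
  filter_upwards [Ioo_mem_nhds ht.1 ht.2] with r hr using ramp_of_mem_Icc (Ioo_subset_Icc_self hr)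

end Ramp

section RampShift

variable {E : Type*} [NormedAddCommGroup E] [NormedSpace ℝ E]
  {F : ℝ × E → E} {x : ℝ → E} {m s t : ℝ} {v : E}

theorem norm_ramp_smul_le : ‖ramp m s t • v‖ ≤ ‖v‖ := by
  rw [norm_smul, Real.norm_of_nonneg ramp_mem_Icc.1]
  exact mul_le_of_le_one_left (norm_nonneg v) ramp_mem_Icc.2

def rampShift (x : ℝ → E) (m s : ℝ) (v : E) (t : ℝ) : E := x t + ramp m s t • v

def rampControl (F : ℝ × E → E) (x : ℝ → E) (m s : ℝ) (v : E) : ℝ → E :=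
  (Ioo m s).indicator fun t => F (t, x t) - F (t, rampShift x m s v t) + (s - m)⁻¹ • v

theorem rampShift_of_le (hms : m ≤ s) (ht : t ≤ m) : rampShift x m s v t = x t := by
  simp [rampShift, ramp_of_le hms ht]

theorem rampShift_right (hms : m ≠ s) : rampShift x m s v s = x s + v := by
  simp [rampShift, ramp_right hms]

theorem ContinuousOn.rampShift {K : Set ℝ} (hx : ContinuousOn x K) :
    ContinuousOn (rampShift x m s v) K :=
  hx.add (continuous_ramp.continuousOn.smul continuousOn_const)

theorem rampControl_of_le (ht : t ≤ m) : rampControl F x m s v t = 0 :=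
  indicator_of_notMem (fun h => (not_lt.2 ht) h.1) _

theorem continuousOn_rampControl (hms : m < s) (hF : Continuous F)
    (hx : ContinuousOn x (Ioo m s)) : ContinuousOn (rampControl F x m s v) {m, s}ᶜ := by
  rw [← frontier_Ioo hms]
  refine ContinuousOn.indicator_compl_frontier isOpen_Ioo ?_
  have hgraph : ContinuousOn (fun t => (t, x t)) (Ioo m s) := continuousOn_id.prodMk hx
  have hshift : ContinuousOn (fun t => (t, rampShift x m s v t)) (Ioo m s) :=
    continuousOn_id.prodMk hx.rampShift
  exact ((hF.comp_continuousOn hgraph).sub (hF.comp_continuousOn hshift)).add continuousOn_const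

theorem norm_rampControl_lt {δ ε : ℝ} (hε : 0 < ε)
    (hF : ∀ t ∈ Ioo m s, ∀ w : E, ‖w‖ < δ →
      dist (F (t, x t)) (F (t, x t + w)) < ε / 2)
    (hvδ : ‖v‖ < δ) (hvε : ‖v‖ < ε * (s - m) / 2) (t : ℝ) :
    ‖rampControl F x m s v t‖ < ε := by
  by_cases ht : t ∈ Ioo m s
  · have hsm : 0 < s - m := sub_pos.2 (ht.1.trans ht.2)
    have hdiff := hF t ht (ramp m s t • v) (norm_ramp_smul_le.trans_lt hvδ)
    have hslope : ‖(s - m)⁻¹ • v‖ < ε / 2 := by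
      rw [norm_smul, norm_inv, Real.norm_of_nonneg hsm.le, inv_mul_lt_iff₀ hsm]
      linarith
    rw [rampControl, indicator_of_mem ht]
    calc ‖F (t, x t) - F (t, rampShift x m s v t) + (s - m)⁻¹ • v‖
        ≤ ‖F (t, x t) - F (t, rampShift x m s v t)‖ + ‖(s - m)⁻¹ • v‖ :=
          norm_add_le _ _
      _ < ε / 2 + ε / 2 := add_lt_add (by rwa [← dist_eq_norm]) hslope
      _ = ε := add_halves ε
  · rw [rampControl, indicator_of_notMem ht, norm_zero]
    exact hε

theorem hasDerivAt_rampShift (hms : m < s) (hx : HasDerivAt x (F (t, x t)) t) (htm : t ≠ m)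
    (hts : t < s) :
    HasDerivAt (rampShift x m s v) (F (t, rampShift x m s v t) + rampControl F x m s v t) t := by
  rcases htm.lt_or_gt with htm | htm
  · refine (hx.add ((hasDerivAt_ramp_of_lt hms.le htm).smul_const v)).congr_deriv ?_
    rw [rampShift_of_le hms.le htm.le, rampControl_of_le htm.le, zero_smul]
  · have ht : t ∈ Ioo m s := ⟨htm, hts⟩
    refine (hx.add ((hasDerivAt_ramp_of_mem_Ioo ht).smul_const v)).congr_deriv ?_
    rw [rampControl, indicator_of_mem ht]
    abel

end RampShift

theorem endpoint_adjustment_general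
    (d : ℕ)
    (F : ℝ × EuclideanSpace ℝ (Fin d) → EuclideanSpace ℝ (Fin d))
    (hFc : Continuous F)
    (a s : ℝ) (has : a < s)
    (x : ℝ → EuclideanSpace ℝ (Fin d))
    (hx : ∀ t ∈ Icc a s, HasDerivAt x (F (t, x t)) t)
    (ε : ℝ) (hε : 0 < ε) :
    ∃ τ ∈ Ioo (0 : ℝ) (s - a), ∃ ρ > (0 : ℝ),
      ∀ y : EuclideanSpace ℝ (Fin d), ‖x s - y‖ < ρ →
        ∃ u : ℝ → EuclideanSpace ℝ (Fin d),
          PiecewiseContinuousOn u (Icc a s) ∧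
          (∀ t, ‖u t‖ < ε) ∧
          (∀ t ∈ Icc a (s - τ), u t = 0) ∧
          ∃ xe : ℝ → EuclideanSpace ℝ (Fin d),
            ContinuousOn xe (Icc a s) ∧
            (∃ S : Finset ℝ, ∀ t ∈ Icc a s \ (S : Set ℝ),
              HasDerivAt xe (F (t, xe t) + u t) t) ∧
            (∀ t ∈ Icc a (s - τ), xe t = x t) ∧
            xe s = y := by
  have hxc : ContinuousOn x (Icc a s) := fun t ht => (hx t ht).continuousAt.continuousWithinAt
  obtain ⟨δ, hδ, hFδ⟩ :=
    isCompact_Icc.exists_pos_forall_dist_lt_near_graph hFc hxc (half_pos hε)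
  obtain ⟨m, ham, hms⟩ := exists_between has
  have hsm : 0 < s - m := sub_pos.2 hms
  refine ⟨s - m, ⟨hsm, by linarith⟩, min δ (ε * (s - m) / 2), by positivity,
    fun y hy => ?_⟩
  simp only [sub_sub_cancel]
  have hIoo : Ioo m s ⊆ Icc a s := Ioo_subset_Icc_self.trans (Icc_subset_Icc ham.le le_rfl)
  rw [norm_sub_rev, lt_min_iff] at hy
  refine ⟨rampControl F x m s (y - x s), ⟨{m, s}, ?_⟩,
    norm_rampControl_lt hε (fun t ht => hFδ t (hIoo ht)) hy.1 hy.2,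
    fun t ht => rampControl_of_le ht.2, rampShift x m s (y - x s), hxc.rampShift,
    ⟨{m, s}, fun t ht => ?_⟩, fun t ht => rampShift_of_le hms.le ht.2, ?_⟩
  · exact (continuousOn_rampControl hms hFc (hxc.mono hIoo)).mono fun t ht => by
      simpa using ht.2
  · simp only [Finset.coe_insert, Finset.coe_singleton, mem_sdiff, mem_insert_iff,
      mem_singleton_iff, not_or] at ht
    exact hasDerivAt_rampShift hms (hx t ht.1) ht.2.1 (ht.1.2.lt_of_ne ht.2.2)
  · rw [rampShift_right hms.ne, add_sub_cancel]

/-- small-control endpoint adjustment for bounded continuous right-hand sides. -/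
theorem endpoint_adjustment
    (d : ℕ) (hd : 1 ≤ d)
    (F : ℝ × EuclideanSpace ℝ (Fin d) → EuclideanSpace ℝ (Fin d))
    (hFc : Continuous F) (C : ℝ) (hFb : ∀ p, ‖F p‖ ≤ C)
    (a s : ℝ) (has : a < s)
    (x : ℝ → EuclideanSpace ℝ (Fin d))
    (hx : ∀ t ∈ Icc a s, HasDerivAt x (F (t, x t)) t)
    (ε : ℝ) (hε : 0 < ε) :
    ∃ τ ∈ Ioo (0 : ℝ) (s - a), ∃ ρ > (0 : ℝ),
      ∀ y : EuclideanSpace ℝ (Fin d), ‖x s - y‖ < ρ →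
        ∃ u : ℝ → EuclideanSpace ℝ (Fin d),
          PiecewiseContinuousOn u (Icc a s) ∧
          (∀ t, ‖u t‖ < ε) ∧
          (∀ t ∈ Icc a (s - τ), u t = 0) ∧
          ∃ xe : ℝ → EuclideanSpace ℝ (Fin d),
            ContinuousOn xe (Icc a s) ∧
            (∃ S : Finset ℝ, ∀ t ∈ Icc a s \ (S : Set ℝ),
              HasDerivAt xe (F (t, xe t) + u t) t) ∧
            (∀ t ∈ Icc a (s - τ), xe t = x t) ∧
            xe s = y :=
  endpoint_adjustment_general d F hFc a s has x hx ε hε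
end
end

section
/- Let V : ℝ^d → ℝ^d be bounded, Lipschitz, and such that the ODE ẋ = V(x) has a trajectory from a δ³-neighborhood of p to a δ³-neighborhood of q in time T > 0 (i.e. there is a solution x with |x(0) − p| ≤ δ³ and |x(T) − q| ≤ δ³). Suppose moreover that for every ε > 0 there is δ > 0 such that: (a) there is a field V₁ with ‖V − V₁‖_Lip < ε/2, V₁ = V outside B_{2δ}(x(0)), whose trajectory through p at time 0 coincides with x outside B_{2δ}(x(0)); (b) there is V₂ with ‖V₁ − V₂‖_Lip < ε/2, V₂ = V₁ outside B_{2δ}(x(T)), whose backward trajectory through q at time T coincides with the V₁-trajectory outside B_{2δ}(x(T)). If B_{2δ}(x(0)) and B_{2δ}(x(T)) are disjoint and both corrections leave a common sub-arc of the trajectory unchanged, then the trajectory of ẏ = V₂(y) with y(0) = p satisfies y(T) = q, and ‖V − V₂‖_Lip < ε. -/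
open Metric Set
open scoped NNReal
noncomputable section

/-- The Lipschitz norm `‖W‖_Lip = ‖W‖_∞ + Lip W`, where `Lip W` is the least
Lipschitz constant of `W`. -/
def lipNorm {d : ℕ} (W : EuclideanSpace ℝ (Fin d) → EuclideanSpace ℝ (Fin d)) : ℝ :=
  (⨆ y, ‖W y‖) + sInf {K : ℝ | 0 ≤ K ∧ ∀ a b, ‖W a - W b‖ ≤ K * ‖a - b‖}


lemma bdd_of_zero_outside {d : ℕ} (hd : 1 ≤ d)
    (h : EuclideanSpace ℝ (Fin d) → EuclideanSpace ℝ (Fin d))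
    (L : ℝ≥0) (hL : LipschitzWith L h) (c : EuclideanSpace ℝ (Fin d)) (r : ℝ)
    (hr : 0 < r) (h0 : ∀ z ∉ ball c r, h z = 0) :
    ∀ y, ‖h y‖ ≤ 2 * L * r := by
  have : Nontrivial (EuclideanSpace ℝ (Fin d)) := by
    haveI : Nonempty (Fin d) := ⟨⟨0, hd⟩⟩
    infer_instance
  obtain ⟨v, hv⟩ := exists_ne (0 : EuclideanSpace ℝ (Fin d))
  set z := c + (r / ‖v‖) • v with hz
  have hzc : dist z c = r := by
    rw [hz, dist_eq_norm]
    simp [norm_smul, abs_div, abs_of_pos hr, div_mul_cancel₀, norm_ne_zero_iff.2 hv,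
      abs_of_nonneg (norm_nonneg v)]
  have hzout : z ∉ ball c r := by simp [mem_ball, hzc]
  intro y
  by_cases hy : y ∈ ball c r
  · have := hL.dist_le_mul y z
    rw [h0 z hzout] at this
    calc ‖h y‖ = dist (h y) (h z) := by rw [h0 z hzout]; simp [dist_eq_norm]
    _ ≤ L * dist y z := hL.dist_le_mul y z
    _ ≤ L * (dist y c + dist c z) := by
        gcongr; exact dist_triangle y c z
    _ ≤ L * (r + r) := by
        gcongr
        · exact le_of_lt (mem_ball.1 hy)
        · rw [dist_comm]; exact hzc.le
    _ = 2 * L * r := by ring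
  · rw [h0 y hy]; simp
    positivity

lemma lipNorm_add_le {d : ℕ}
    (f g : EuclideanSpace ℝ (Fin d) → EuclideanSpace ℝ (Fin d))
    (Kf Kg : ℝ≥0) (hf : LipschitzWith Kf f) (hg : LipschitzWith Kg g)
    (Cf Cg : ℝ) (hCf : ∀ y, ‖f y‖ ≤ Cf) (hCg : ∀ y, ‖g y‖ ≤ Cg) :
    lipNorm (fun z => f z + g z) ≤ lipNorm f + lipNorm g := by
  have memS : ∀ (h : EuclideanSpace ℝ (Fin d) → EuclideanSpace ℝ (Fin d)) (L : ℝ≥0),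
      LipschitzWith L h → (L : ℝ) ∈ {K : ℝ | 0 ≤ K ∧ ∀ a b, ‖h a - h b‖ ≤ K * ‖a - b‖} := by
    intro h L hL
    refine ⟨L.coe_nonneg, fun a b => ?_⟩
    simpa [dist_eq_norm] using hL.dist_le_mul a b
  have bddB : ∀ (h : EuclideanSpace ℝ (Fin d) → EuclideanSpace ℝ (Fin d)),
      BddBelow {K : ℝ | 0 ≤ K ∧ ∀ a b, ‖h a - h b‖ ≤ K * ‖a - b‖} :=
    fun h => ⟨0, fun K hK => hK.1⟩
  have hbf : BddAbove (range fun y => ‖f y‖) := ⟨Cf, by rintro _ ⟨y, rfl⟩; exact hCf y⟩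
  have hbg : BddAbove (range fun y => ‖g y‖) := ⟨Cg, by rintro _ ⟨y, rfl⟩; exact hCg y⟩
  unfold lipNorm
  have h1 : (⨆ y, ‖f y + g y‖) ≤ (⨆ y, ‖f y‖) + ⨆ y, ‖g y‖ := by
    refine ciSup_le fun y => ?_
    calc ‖f y + g y‖ ≤ ‖f y‖ + ‖g y‖ := norm_add_le _ _
    _ ≤ _ := add_le_add (le_ciSup hbf y) (le_ciSup hbg y)
  have h2 : sInf {K : ℝ | 0 ≤ K ∧ ∀ a b, ‖(f a + g a) - (f b + g b)‖ ≤ K * ‖a - b‖}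
      ≤ sInf {K : ℝ | 0 ≤ K ∧ ∀ a b, ‖f a - f b‖ ≤ K * ‖a - b‖}
      + sInf {K : ℝ | 0 ≤ K ∧ ∀ a b, ‖g a - g b‖ ≤ K * ‖a - b‖} := by
    rw [← sub_le_iff_le_add']
    refine le_csInf ⟨_, memS g Kg hg⟩ fun b hb => ?_
    rw [sub_le_iff_le_add']
    rw [← sub_le_iff_le_add]
    refine le_csInf ⟨_, memS f Kf hf⟩ fun a ha => ?_
    rw [sub_le_iff_le_add]
    refine csInf_le (bddB _) ?_
    refine ⟨add_nonneg ha.1 hb.1, fun u w => ?_⟩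
    calc ‖(f u + g u) - (f w + g w)‖ = ‖(f u - f w) + (g u - g w)‖ := by
          congr 1; abel
    _ ≤ ‖f u - f w‖ + ‖g u - g w‖ := norm_add_le _ _
    _ ≤ a * ‖u - w‖ + b * ‖u - w‖ := add_le_add (ha.2 u w) (hb.2 u w)
    _ = (a + b) * ‖u - w‖ := by ring
  calc _ ≤ _ := add_le_add h1 h2
  _ = _ := by ring

/-- gluing the forward (initial point) and backward (endpoint)
local trajectory corrections: two disjointly supported small Lipschitz
perturbations of `V` steer `p` exactly to `q` along the original trajectory,
with total Lipschitz-norm correction `< ε`. -/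
theorem gluing_corrections
    (d : ℕ) (hd : 1 ≤ d)
    (V : EuclideanSpace ℝ (Fin d) → EuclideanSpace ℝ (Fin d))
    (K : ℝ≥0) (hVlip : LipschitzWith K V)
    (MV : ℝ) (hVbdd : ∀ z, ‖V z‖ ≤ MV)
    (p q : EuclideanSpace ℝ (Fin d))
    (ε δ T : ℝ) (hε : 0 < ε) (hδ0 : 0 < δ) (hδ1 : δ < 1) (hT : 0 < T)
    (x : ℝ → EuclideanSpace ℝ (Fin d))
    (hx : ∀ t, HasDerivAt x (V (x t)) t)
    (hxp : ‖x 0 - p‖ ≤ δ ^ 3) (hxq : ‖x T - q‖ ≤ δ ^ 3)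
    (V₁ V₂ : EuclideanSpace ℝ (Fin d) → EuclideanSpace ℝ (Fin d))
    (K₁ : ℝ≥0) (hV₁lip : LipschitzWith K₁ V₁)
    (K₂ : ℝ≥0) (hV₂lip : LipschitzWith K₂ V₂)
    -- (a) forward correction near x(0)
    (hV₁close : lipNorm (fun z => V z - V₁ z) < ε / 2)
    (hV₁out : ∀ z ∉ ball (x 0) (2 * δ), V₁ z = V z)
    (y₁ : ℝ → EuclideanSpace ℝ (Fin d))
    (hy₁ : ∀ t, HasDerivAt y₁ (V₁ (y₁ t)) t)
    (hy₁0 : y₁ 0 = p)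
    (hy₁x : ∀ t, x t ∉ ball (x 0) (2 * δ) → y₁ t = x t)
    -- (b) backward correction near x(T)
    (hV₂close : lipNorm (fun z => V₁ z - V₂ z) < ε / 2)
    (hV₂out : ∀ z ∉ ball (x T) (2 * δ), V₂ z = V₁ z)
    (y₂ : ℝ → EuclideanSpace ℝ (Fin d))
    (hy₂ : ∀ t, HasDerivAt y₂ (V₂ (y₂ t)) t)
    (hy₂T : y₂ T = q)
    (hy₂y₁ : ∀ t, y₁ t ∉ ball (x T) (2 * δ) → y₂ t = y₁ t)
    -- disjointness of the two correction regions
    (hdisj : Disjoint (ball (x 0) (2 * δ)) (ball (x T) (2 * δ)))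
    -- a common sub-arc of the trajectory is left unchanged by both corrections
    (hsubarc : ∃ t₀ ∈ Ioo (0 : ℝ) T,
      x t₀ ∉ ball (x 0) (2 * δ) ∪ ball (x T) (2 * δ)) :
    y₂ 0 = p ∧ y₂ T = q ∧ lipNorm (fun z => V z - V₂ z) < ε := by
  have hδ3 : δ ^ 3 < 2 * δ := by nlinarith [mul_pos (mul_pos (sub_pos.2 hδ1) (show (0:ℝ) < 1 + δ by linarith)) hδ0]
  have hpball : p ∈ ball (x 0) (2 * δ) := by
    rw [mem_ball, dist_eq_norm, ← norm_neg, neg_sub]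
    exact lt_of_le_of_lt hxp hδ3
  have hpnot : p ∉ ball (x T) (2 * δ) := fun hp => hdisj.ne_of_mem hpball hp rfl
  have hy₂0 : y₂ 0 = p := by
    rw [hy₂y₁ 0 (by rw [hy₁0]; exact hpnot), hy₁0]
  refine ⟨hy₂0, hy₂T, ?_⟩
  set f := fun z => V z - V₁ z with hfdef
  set g := fun z => V₁ z - V₂ z with hgdef
  have hf : LipschitzWith (K + K₁) f := hVlip.sub hV₁lip
  have hg : LipschitzWith (K₁ + K₂) g := hV₁lip.sub hV₂lip
  have hf0 : ∀ z ∉ ball (x 0) (2 * δ), f z = 0 := fun z hz =>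
    sub_eq_zero_of_eq (hV₁out z hz).symm
  have hg0 : ∀ z ∉ ball (x T) (2 * δ), g z = 0 := fun z hz =>
    sub_eq_zero_of_eq (hV₂out z hz).symm
  have hCf := bdd_of_zero_outside hd f (K + K₁) hf (x 0) (2 * δ) (by positivity) hf0
  have hCg := bdd_of_zero_outside hd g (K₁ + K₂) hg (x T) (2 * δ) (by positivity) hg0
  have key := lipNorm_add_le f g (K + K₁) (K₁ + K₂) hf hg _ _ hCf hCg
  have heq : (fun z => V z - V₂ z) = fun z => f z + g z := by
    funext z; simp only [hfdef, hgdef]; abel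
  rw [heq]
  calc lipNorm (fun z => f z + g z) ≤ lipNorm f + lipNorm g := key
  _ < ε / 2 + ε / 2 := add_lt_add hV₁close hV₂close
  _ = ε := by ring
end
end
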